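/- For a permutation π of {1,…,n} chosen uniformly at random, the expected number of Nash equilibria of the permutation game (I, I^π) equals n. Equivalently, with c(π) denoting the number of orbits of π on {1,…,n}, one has ∑_{π ∈ S_n} (2^{c(π)} − 1) = n · n!. -/

import Mathlib

open Matrix BigOperators

/-- A mixed strategy: nonnegative entries summing to 1. -/
def IsMixed {I : Type*} [Fintype I] (x : I → ℝ) : Prop :=
  (∀ i, 0 ≤ x i) ∧ ∑ i, x i = 1

/-- `(x, y)` is a Nash equilibrium of the bimatrix game `(A, B)`. -/
def IsNash {I J : Type*} [Fintype I] [Fintype J]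
    (A B : Matrix I J ℝ) (x : I → ℝ) (y : J → ℝ) : Prop :=
  IsMixed x ∧ IsMixed y ∧
  (∀ x' : I → ℝ, IsMixed x' → x' ⬝ᵥ (A *ᵥ y) ≤ x ⬝ᵥ (A *ᵥ y)) ∧
  (∀ y' : J → ℝ, IsMixed y' → x ⬝ᵥ (B *ᵥ y') ≤ x ⬝ᵥ (B *ᵥ y))

/-- The matrix `I^π` whose `i`-th row is the transpose of the `π(i)`-th
standard unit vector. -/
def permMatrix {n : ℕ} (π : Equiv.Perm (Fin n)) : Matrix (Fin n) (Fin n) ℝ :=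
  Matrix.of fun i j => if j = π i then 1 else 0

/-- The number of orbits of `π` on `{1,…,n}` (cycles of `π`, including fixed
points): the number of distinct `SameCycle`-classes. -/
noncomputable def numOrbits {n : ℕ} (π : Equiv.Perm (Fin n)) : ℕ :=
  {s : Set (Fin n) | ∃ i, s = {j | π.SameCycle i j}}.ncard

/-!
In the game `(I, I^π)` the row player earns `y i` with row `i` and the column player earns
`x (π⁻¹ j)` with column `j`. At an equilibrium both players use only best replies, which forces
`π⁻¹ S ⊆ supp x ⊆ S` for the support `S` of `y`; hence `π S = S` and both strategies are uniform
on `S`. Conversely every such pair is an equilibrium, so the equilibria correspond to the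
nonempty `π`-invariant sets, i.e. the nonempty unions of cycles: there are `2 ^ c(π) - 1`.
Summed over `π`, Burnside's lemma for `S_n` acting on subsets of `{1, …, n}`, whose orbits are
the `n + 1` possible sizes, gives `(n + 1) · n! - n! = n · n!`.
-/

open MulAction Equiv
open scoped Pointwise

section Counting

variable {α : Type*} [DecidableEq α]

theorem Finset.perm_smul_eq_self_iff {π : Perm α} {A : Finset α} :
    π • A = A ↔ ∀ a, π a ∈ A ↔ a ∈ A := by
  rw [eq_comm, ← inv_smul_eq_iff, eq_comm, Finset.ext_iff]
  simp only [Finset.mem_inv_smul_finset_iff, Perm.smul_def]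
  exact forall_congr' fun a => Iff.comm

theorem Finset.mem_iff_of_sameCycle {π : Perm α} {A : Finset α} (hA : π • A = A)
    {a b : α} (hab : π.SameCycle a b) : a ∈ A ↔ b ∈ A := by
  obtain ⟨k, rfl⟩ := hab
  have hk : (π ^ k) • A = A := mem_fixedBy_zpow (α := Finset α) hA k
  rw [← Perm.smul_def, ← Finset.smul_mem_smul_finset_iff (π ^ k), hk]

variable [Fintype α]

open Classical in
noncomputable def Equiv.Perm.finsetCyclesEquivFixedBy (π : Perm α) :
    Finset (Quotient (Perm.SameCycle.setoid π)) ≃ fixedBy (Finset α) π where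
  toFun T := ⟨({a | ⟦a⟧ ∈ T} : Finset α), Finset.perm_smul_eq_self_iff.2 fun a => by
    have hπa : (⟦π a⟧ : Quotient (Perm.SameCycle.setoid π)) = ⟦a⟧ :=
      Quotient.sound (Perm.sameCycle_apply_left.2 (Perm.SameCycle.refl π a))
    simp only [Finset.mem_filter, Finset.mem_univ, true_and, hπa]⟩
  invFun A := A.1.image (Quotient.mk _)
  left_inv T := by
    ext q
    induction q using Quotient.inductionOn
    simp only [Finset.mem_image, Finset.mem_filter, Finset.mem_univ, true_and]
    exact ⟨fun ⟨b, hb, hba⟩ => hba ▸ hb, fun ha => ⟨_, ha, rfl⟩⟩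
  right_inv A := by
    ext a
    simp only [Finset.mem_filter, Finset.mem_univ, true_and, Finset.mem_image, Quotient.eq]
    exact ⟨fun ⟨b, hb, hba⟩ => (Finset.mem_iff_of_sameCycle A.2 hba).1 hb,
      fun ha => ⟨a, ha, Perm.SameCycle.refl π a⟩⟩

theorem Equiv.Perm.card_fixedBy_finset (π : Perm α) :
    Nat.card (fixedBy (Finset α) π) = 2 ^ Nat.card (Quotient (Perm.SameCycle.setoid π)) := by
  have := Fintype.ofFinite (Quotient (Perm.SameCycle.setoid π))
  rw [← Nat.card_congr π.finsetCyclesEquivFixedBy, Nat.card_eq_fintype_card,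
    Fintype.card_finset, Nat.card_eq_fintype_card]

/-- Two finsets lie in the same `Perm α`-orbit iff they have the same size. -/
noncomputable def orbitRelQuotientPermFinsetEquiv :
    orbitRel.Quotient (Perm α) (Finset α) ≃ Fin (Fintype.card α + 1) := by
  refine Equiv.ofBijective (Quotient.lift
    (fun A : Finset α => (⟨A.card, Nat.lt_succ_of_le A.card_le_univ⟩ : Fin _)) ?_) ⟨?_, ?_⟩
  · rintro A B ⟨π, rfl⟩
    simp [Finset.card_smul_finset]
  · rintro ⟨A⟩ ⟨B⟩ h
    obtain ⟨π, hπ⟩ := (Set.powersetCard.isPretransitive (α := α) (n := B.card)).exists_smul_eq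
      ⟨A, Set.powersetCard.mem_iff.2 (Fin.mk.inj_iff.1 h)⟩ ⟨B, Set.powersetCard.mem_iff.2 rfl⟩
    exact Quotient.sound ⟨π⁻¹, inv_smul_eq_iff.2 (congrArg Subtype.val hπ).symm⟩
  · rintro ⟨k, hk⟩
    obtain ⟨A, -, hA⟩ := Finset.exists_subset_card_eq (s := (Finset.univ : Finset α))
      (Nat.le_of_lt_succ hk)
    exact ⟨⟦A⟧, Fin.ext hA⟩

theorem sum_card_fixedBy_perm_finset :
    ∑ π : Perm α, Nat.card (fixedBy (Finset α) π) =
      (Fintype.card α + 1) * (Fintype.card α).factorial := by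
  classical
  have := Fintype.ofFinite (orbitRel.Quotient (Perm α) (Finset α))
  simp only [Nat.card_eq_fintype_card]
  rw [sum_card_fixedBy_eq_card_orbits_mul_card_group, Fintype.card_perm,
    Fintype.card_congr orbitRelQuotientPermFinsetEquiv, Fintype.card_fin]

theorem sum_card_fixedBy_perm_finset_sub_one :
    ∑ π : Perm α, (Nat.card (fixedBy (Finset α) π) - 1) =
      Fintype.card α * (Fintype.card α).factorial := by
  have hpos (π : Perm α) : 1 ≤ Nat.card (fixedBy (Finset α) π) :=
    Nat.one_le_iff_ne_zero.2
      (Nat.card_ne_zero.2 ⟨⟨⟨∅, Finset.smul_finset_empty π⟩⟩, inferInstance⟩)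
  rw [Finset.sum_tsub_distrib _ fun π _ => hpos π, sum_card_fixedBy_perm_finset]
  simp [add_mul, Fintype.card_perm]

end Counting

theorem numOrbits_eq_card_quotient {n : ℕ} (π : Perm (Fin n)) :
    numOrbits π = Nat.card (Quotient (Perm.SameCycle.setoid π)) := by
  have hclasses :
      {s : Set (Fin n) | ∃ i, s = {j | π.SameCycle i j}} = (Perm.SameCycle.setoid π).classes :=
    Set.ext fun s => exists_congr fun i => by
      rw [show {j | π.SameCycle i j} = {j | π.SameCycle j i} from
        Set.ext fun j => Perm.sameCycle_comm]
      rfl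
  rw [numOrbits, hclasses, ← Nat.card_coe_set_eq, Nat.card_congr (Setoid.quotientEquivClasses _)]

section UniformStrategy

variable {ι : Type*} [DecidableEq ι]

noncomputable def uniformOn (A : Finset ι) : ι → ℝ :=
  fun i => if i ∈ A then (A.card : ℝ)⁻¹ else 0

theorem uniformOn_ne_zero_iff {A : Finset ι} (hA : A.Nonempty) {i : ι} :
    uniformOn A i ≠ 0 ↔ i ∈ A := by
  by_cases hi : i ∈ A <;> simp [uniformOn, hi, hA.card_ne_zero]

theorem uniformOn_injOn : Set.InjOn uniformOn {A : Finset ι | A.Nonempty} :=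
  fun A hA B hB hAB => Finset.ext fun i => by
    rw [← uniformOn_ne_zero_iff hA, ← uniformOn_ne_zero_iff hB, hAB]

theorem uniformOn_le (A : Finset ι) (i : ι) : uniformOn A i ≤ (A.card : ℝ)⁻¹ := by
  unfold uniformOn; split_ifs
  exacts [le_rfl, by positivity]

theorem uniformOn_comp_perm {π : Perm ι} {A : Finset ι} (hA : π • A = A) :
    uniformOn A ∘ π = uniformOn A := by
  funext i
  simp [uniformOn, Finset.perm_smul_eq_self_iff.1 hA i]

end UniformStrategy

section MixedStrategies

variable {ι : Type*} [Fintype ι] {x u : ι → ℝ}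

theorem IsMixed.exists_pos (hx : IsMixed x) : ∃ i, 0 < x i := by
  by_contra! h
  have : ∑ i, x i = 0 := Finset.sum_eq_zero fun i _ => (h i).antisymm (hx.1 i)
  linarith [hx.2]

theorem IsMixed.dotProduct_le (hx : IsMixed x) {c : ℝ} (hu : ∀ i, u i ≤ c) : x ⬝ᵥ u ≤ c :=
  calc x ⬝ᵥ u ≤ ∑ i, x i * c :=
        Finset.sum_le_sum fun i _ => mul_le_mul_of_nonneg_left (hu i) (hx.1 i)
    _ = c := by rw [← Finset.sum_mul, hx.2, one_mul]

theorem IsMixed.apply_eq_of_ne_zero (hx : IsMixed x) (hu : ∀ i, u i ≤ x ⬝ᵥ u) {i : ι}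
    (hi : x i ≠ 0) : u i = x ⬝ᵥ u := by
  have hsum : ∑ j, x j * (x ⬝ᵥ u - u j) = 0 := by
    simp only [mul_sub, Finset.sum_sub_distrib, ← Finset.sum_mul, hx.2, one_mul]
    exact sub_eq_zero.2 rfl
  have hterm := (Finset.sum_eq_zero_iff_of_nonneg fun j _ =>
    mul_nonneg (hx.1 j) (sub_nonneg.2 (hu j))).1 hsum i (Finset.mem_univ i)
  linarith [(mul_eq_zero.1 hterm).resolve_left hi]

variable [DecidableEq ι]

theorem isMixed_single (i : ι) : IsMixed (Pi.single i (1 : ℝ)) :=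
  ⟨fun j => by by_cases h : j = i <;> simp [h], by simp⟩

theorem le_of_forall_isMixed_dotProduct_le {c : ℝ}
    (h : ∀ x', IsMixed x' → x' ⬝ᵥ u ≤ c) (i : ι) : u i ≤ c := by
  simpa using h _ (isMixed_single i)

theorem isMixed_uniformOn {A : Finset ι} (hA : A.Nonempty) : IsMixed (uniformOn A) := by
  refine ⟨fun i => by unfold uniformOn; split_ifs <;> positivity, ?_⟩
  simp only [uniformOn]
  rw [Finset.sum_ite_mem, Finset.univ_inter, Finset.sum_const, nsmul_eq_mul,
    mul_inv_cancel₀ (Nat.cast_ne_zero.2 hA.card_ne_zero)]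

theorem uniformOn_dotProduct_self {A : Finset ι} (hA : A.Nonempty) :
    uniformOn A ⬝ᵥ uniformOn A = (A.card : ℝ)⁻¹ := by
  have hsq (i : ι) : uniformOn A i * uniformOn A i = (A.card : ℝ)⁻¹ * uniformOn A i := by
    unfold uniformOn; split_ifs <;> simp
  simp only [dotProduct, hsq, ← Finset.mul_sum, (isMixed_uniformOn hA).2, mul_one]

theorem IsMixed.eq_uniformOn (hx : IsMixed x) {A : Finset ι} {c : ℝ}
    (hA : ∀ i ∈ A, x i = c) (hAc : ∀ i ∉ A, x i = 0) : x = uniformOn A := by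
  have hc : (A.card : ℝ) * c = 1 := by
    rw [← hx.2, ← Finset.sum_subset (Finset.subset_univ A) fun i _ hi => hAc i hi,
      Finset.sum_congr rfl hA, Finset.sum_const, nsmul_eq_mul]
  funext i
  by_cases hi : i ∈ A
  · rw [uniformOn, if_pos hi, hA i hi, eq_inv_of_mul_eq_one_right hc]
  · rw [uniformOn, if_neg hi, hAc i hi]

end MixedStrategies

section PermutationGame

variable {n : ℕ}

theorem permMatrix_mulVec (π : Perm (Fin n)) (v : Fin n → ℝ) :
    permMatrix π *ᵥ v = v ∘ π := by
  ext i
  simp [permMatrix, mulVec, dotProduct, ite_mul]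

theorem isNash_uniformOn {π : Perm (Fin n)} {A : Finset (Fin n)} (hA : A.Nonempty)
    (hπA : π • A = A) : IsNash 1 (permMatrix π) (uniformOn A) (uniformOn A) := by
  have hval : ∀ x', IsMixed x' → x' ⬝ᵥ uniformOn A ≤ uniformOn A ⬝ᵥ uniformOn A :=
    fun x' hx' => (uniformOn_dotProduct_self hA).symm ▸ hx'.dotProduct_le (uniformOn_le A)
  refine ⟨isMixed_uniformOn hA, isMixed_uniformOn hA, ?_, fun y' hy' => ?_⟩
  · simpa only [one_mulVec] using hval
  · have hsymm : uniformOn A ∘ π.symm = uniformOn A :=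
      uniformOn_comp_perm (π := π⁻¹) (inv_smul_eq_iff.2 hπA.symm)
    rw [permMatrix_mulVec, permMatrix_mulVec, uniformOn_comp_perm hπA,
      ← comp_equiv_symm_dotProduct, hsymm, dotProduct_comm]
    exact hval y' hy'

theorem exists_eq_uniformOn_of_isNash {π : Perm (Fin n)} {x y : Fin n → ℝ}
    (h : IsNash 1 (permMatrix π) x y) :
    ∃ A : Finset (Fin n), A.Nonempty ∧ π • A = A ∧ x = uniformOn A ∧ y = uniformOn A := by
  obtain ⟨hx, hy, hrow, hcol⟩ := h
  simp only [one_mulVec, permMatrix_mulVec, ← comp_equiv_symm_dotProduct] at hrow hcol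
  set w := x ∘ π.symm
  replace hcol : ∀ y', IsMixed y' → y' ⬝ᵥ w ≤ y ⬝ᵥ w := fun y' hy' => by
    rw [dotProduct_comm y', dotProduct_comm y]; exact hcol y' hy'
  have hwπ : ∀ i, w (π i) = x i := fun i => congrArg x (π.symm_apply_apply i)
  set m := x ⬝ᵥ y
  set v := y ⬝ᵥ w
  have hy_le : ∀ i, y i ≤ m := le_of_forall_isMixed_dotProduct_le hrow
  have hw_le : ∀ j, w j ≤ v := le_of_forall_isMixed_dotProduct_le hcol
  have hy_eq : ∀ i, x i ≠ 0 → y i = m := fun i => hx.apply_eq_of_ne_zero hy_le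
  have hw_eq : ∀ j, y j ≠ 0 → w j = v := fun j => hy.apply_eq_of_ne_zero hw_le
  obtain ⟨i₀, hi₀⟩ := hy.exists_pos
  have hm : 0 < m := hi₀.trans_le (hy_le i₀)
  have hv : 0 < v := let ⟨i, hi⟩ := hx.exists_pos; (hwπ i ▸ hi).trans_le (hw_le (π i))
  set S : Finset (Fin n) := {i | y i ≠ 0} with hS
  have mem_S : ∀ {i}, i ∈ S ↔ y i ≠ 0 := by simp [hS]
  -- `π⁻¹ S ⊆ supp x ⊆ S`, and `π⁻¹ S` has as many elements as `S`
  have hxS : ∀ i, x i ≠ 0 → i ∈ S := fun i hi => mem_S.2 ((hy_eq i hi).trans_ne hm.ne')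
  have hπS : π • S = S := by
    refine (inv_smul_eq_iff.1 (Finset.eq_of_subset_of_card_le (fun i hi => ?_)
      (Finset.card_smul_finset _ _).ge)).symm
    rw [Finset.mem_inv_smul_finset_iff, Perm.smul_def] at hi
    exact hxS i (hwπ i ▸ (hw_eq _ (mem_S.1 hi)).trans_ne hv.ne')
  have hxS' : ∀ i ∈ S, x i = v := fun i hi =>
    hwπ i ▸ hw_eq (π i) (mem_S.1 ((Finset.perm_smul_eq_self_iff.1 hπS i).2 hi))
  refine ⟨S, ⟨i₀, mem_S.2 hi₀.ne'⟩, hπS, hx.eq_uniformOn hxS' fun i hi => ?_,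
    hy.eq_uniformOn (fun i hi => hy_eq i ((hxS' i hi).trans_ne hv.ne')) fun i hi => ?_⟩
  · exact of_not_not fun h => hi (hxS i h)
  · exact of_not_not fun h => hi (mem_S.2 h)

theorem isNash_permMatrix_iff {π : Perm (Fin n)} {x y : Fin n → ℝ} :
    IsNash 1 (permMatrix π) x y ↔
      ∃ A : Finset (Fin n), A.Nonempty ∧ π • A = A ∧ x = uniformOn A ∧ y = uniformOn A :=
  ⟨exists_eq_uniformOn_of_isNash, fun ⟨_, hA, hπA, hx, hy⟩ => hx ▸ hy ▸ isNash_uniformOn hA hπA⟩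

theorem ncard_setOf_isNash_permMatrix (π : Perm (Fin n)) :
    {p : (Fin n → ℝ) × (Fin n → ℝ) | IsNash 1 (permMatrix π) p.1 p.2}.ncard =
      Nat.card (fixedBy (Finset (Fin n)) π) - 1 := by
  have hset : {p : (Fin n → ℝ) × (Fin n → ℝ) | IsNash 1 (permMatrix π) p.1 p.2} =
      (fun A => (uniformOn A, uniformOn A)) '' (fixedBy (Finset (Fin n)) π \ {∅}) := by
    ext ⟨x, y⟩
    simp only [Set.mem_ofPred_eq, isNash_permMatrix_iff, Set.mem_image, Set.mem_sdiff,
      mem_fixedBy, Set.mem_singleton_iff, Prod.mk.injEq, ← Finset.nonempty_iff_ne_empty]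
    exact ⟨fun ⟨A, hA, hπA, hx, hy⟩ => ⟨A, ⟨hπA, hA⟩, hx.symm, hy.symm⟩,
      fun ⟨A, ⟨hπA, hA⟩, hx, hy⟩ => ⟨A, hA, hπA, hx.symm, hy.symm⟩⟩
  have hinj :
      Set.InjOn (fun A => (uniformOn A, uniformOn A)) (fixedBy (Finset (Fin n)) π \ {∅}) :=
    fun A hA B hB hAB => uniformOn_injOn (Finset.nonempty_iff_ne_empty.2 hA.2)
      (Finset.nonempty_iff_ne_empty.2 hB.2) (congrArg Prod.fst hAB)
  have hempty : ∅ ∈ fixedBy (Finset (Fin n)) π := Finset.smul_finset_empty π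
  rw [hset, hinj.ncard_image, Set.ncard_sdiff_singleton_of_mem hempty, Nat.card_coe_set_eq]

end PermutationGame

theorem sum_two_pow_numOrbits_sub_one (n : ℕ) :
    ∑ π : Perm (Fin n), (2 ^ numOrbits π - 1) = n * n.factorial := by
  simp_rw [numOrbits_eq_card_quotient, ← Perm.card_fixedBy_finset]
  simpa using sum_card_fixedBy_perm_finset_sub_one (α := Fin n)

/-- A random `n × n` permutation game has in expectation `n` Nash equilibria:
summed over all `n!` permutations, the total number of Nash equilibria is
`n · n!`; equivalently `∑_{π ∈ S_n} (2^{c(π)} − 1) = n · n!`. -/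
theorem stmt8 {n : ℕ} :
    (∑ π : Equiv.Perm (Fin n),
        {p : (Fin n → ℝ) × (Fin n → ℝ) |
          IsNash (1 : Matrix (Fin n) (Fin n) ℝ) (permMatrix π) p.1 p.2}.ncard) =
      n * n.factorial ∧
    (∑ π : Equiv.Perm (Fin n), (2 ^ numOrbits π - 1)) = n * n.factorial := by
  refine ⟨?_, sum_two_pow_numOrbits_sub_one n⟩
  simp_rw [ncard_setOf_isNash_permMatrix, Perm.card_fixedBy_finset, ← numOrbits_eq_card_quotient]
  exact sum_two_pow_numOrbits_sub_one n
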